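/- There exists a constant C > 0 such that for all positive integers n, every entry of the deformed Mertens matrix M̃_n = T Ũ_n⁻¹ T satisfies |(M̃_n)_{ij}| ≤ C log(n + 1). -/

import Mathlib

/-!
With `D = diag(1/k_i)` one has `Ũ_n = n • D T D`, and `T⁻¹` has `1` on the antidiagonal and
`-1` just below it, so `M̃_n = n⁻¹ • T D⁻¹ T⁻¹ D⁻¹ T`. Since `k_{s+1-i} = ⌊n/k_i⌋`, for
`i + j ≤ s + 1` this gives
`n M̃_{ij} = k_i ⌊n/k_i⌋ - Σ_{i < l ≤ s+1-j} k_l (⌊n/k_{l-1}⌋ - ⌊n/k_l⌋)`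
(and `M̃_{ij} = 0` otherwise), where the first term is at most `n` and every gap is nonnegative.
For consecutive `a < b` in `S_n`, either `b = a + 1` (when `b² ≤ n`) or `⌊n/a⌋ ≤ ⌊n/b⌋ + 2`,
so each gap is at most `2 (⌊n/a⌋ + b)`, and the gaps add up to at most
`4 Σ_{d ∈ S_n} d = 4 Σ_{d ∈ S_n} ⌊n/d⌋ ≤ 4 n H_n`.
-/

/-- The set of approximate divisors of `n`: distinct values of `⌊n/k⌋` for `1 ≤ k ≤ n`. -/
def Sn (n : ℕ) : Finset ℕ := (Finset.Icc 1 n).image (fun k => n / k)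

/-- The increasing enumeration `k_1 < ⋯ < k_s` of `S_n` (0-indexed by `Fin s`). -/
noncomputable def kseq (n : ℕ) : Fin (Sn n).card → ℕ :=
  fun i => ((Sn n).orderIsoOfFin rfl i : ℕ)

/-- The real matrix `T` with ones on and above the antidiagonal. -/
def TmatR (s : ℕ) : Matrix (Fin s) (Fin s) ℝ :=
  fun i j => if (i : ℕ) + (j : ℕ) + 1 ≤ s then 1 else 0

/-- The deformed matrix `Ũ_n`, with entries `n/(k_i k_j)` on and above the
antidiagonal and `0` below it. -/
noncomputable def Utilde (n : ℕ) : Matrix (Fin (Sn n).card) (Fin (Sn n).card) ℝ :=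
  fun i j => if (i : ℕ) + (j : ℕ) + 1 ≤ (Sn n).card then
    (n : ℝ) / ((kseq n i : ℝ) * (kseq n j : ℝ)) else 0

/-- The deformed Mertens matrix `M̃_n = T Ũ_n⁻¹ T`. -/
noncomputable def Mtilde (n : ℕ) : Matrix (Fin (Sn n).card) (Fin (Sn n).card) ℝ :=
  TmatR (Sn n).card * (Utilde n)⁻¹ * TmatR (Sn n).card

open Finset

section ApproximateDivisors

variable {n : ℕ}

lemma pos_of_mem_Sn {d : ℕ} (hd : d ∈ Sn n) : 0 < d := by
  obtain ⟨k, hk, rfl⟩ := mem_image.mp hd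
  exact Nat.div_pos (mem_Icc.mp hk).2 (mem_Icc.mp hk).1

lemma le_of_mem_Sn {d : ℕ} (hd : d ∈ Sn n) : d ≤ n := by
  obtain ⟨k, -, rfl⟩ := mem_image.mp hd
  exact Nat.div_le_self n k

lemma div_mem_Sn {d : ℕ} (hd : d ∈ Sn n) : n / d ∈ Sn n :=
  mem_image.mpr ⟨d, mem_Icc.mpr ⟨pos_of_mem_Sn hd, le_of_mem_Sn hd⟩, rfl⟩

lemma Nat.le_div_div_self {d : ℕ} (h : 0 < n / d) : d ≤ n / (n / d) :=
  (Nat.le_div_iff_mul_le h).mpr (Nat.mul_div_le n d)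

lemma div_div_of_mem_Sn {d : ℕ} (hd : d ∈ Sn n) : n / (n / d) = d := by
  obtain ⟨k, hk, rfl⟩ := mem_image.mp hd
  obtain ⟨hk1, hkn⟩ := mem_Icc.mp hk
  have hd0 : 0 < n / k := Nat.div_pos hkn hk1
  refine le_antisymm ?_ (Nat.le_div_div_self (Nat.div_pos (Nat.div_le_self n k) hd0))
  exact Nat.div_le_div_left (Nat.le_div_div_self hd0) hk1

lemma mem_Sn_of_mul_self_le {m : ℕ} (hm : 0 < m) (h : m * m ≤ n) : m ∈ Sn n := by
  have hmq : m ≤ n / m := (Nat.le_div_iff_mul_le hm).mpr h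
  have hq : 0 < n / m := hm.trans_le hmq
  have hlt : n / (n / m) < m + 1 :=
    (Nat.div_lt_iff_lt_mul hq).mpr (by nlinarith [Nat.lt_mul_div_succ n hm])
  have hmem : n / (n / m) ∈ Sn n :=
    mem_image.mpr ⟨n / m, mem_Icc.mpr ⟨hq, Nat.div_le_self n m⟩, rfl⟩
  rwa [le_antisymm (Nat.lt_succ_iff.mp hlt) (Nat.le_div_div_self hq)] at hmem

lemma div_lt_div_of_mem_Sn {d e : ℕ} (hd : d ∈ Sn n) (he : e ∈ Sn n) (h : d < e) :
    n / e < n / d := by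
  refine (Nat.div_le_div_left h.le (pos_of_mem_Sn hd)).lt_of_ne fun heq => h.ne ?_
  rw [← div_div_of_mem_Sn hd, ← div_div_of_mem_Sn he, heq]

end ApproximateDivisors

section Consecutive

variable {n a b : ℕ}

lemma eq_succ_of_consecutive_of_mul_self_le (hab : a < b) (hcons : ∀ d ∈ Sn n, a < d → b ≤ d)
    (h : b * b ≤ n) : b = a + 1 :=
  le_antisymm (hcons _ (mem_Sn_of_mul_self_le a.succ_pos
    ((Nat.mul_self_le_mul_self hab).trans h)) a.lt_succ_self) hab

lemma div_le_div_add_two_of_consecutive (ha : a ∈ Sn n) (hb : b ∈ Sn n)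
    (hcons : ∀ d ∈ Sn n, a < d → b ≤ d) (h : n < b * b) : n / a ≤ n / b + 2 := by
  set q := n / b
  have hq : q ∈ Sn n := div_mem_Sn hb
  have hq0 : 0 < q := pos_of_mem_Sn hq
  have hqb : q < b := (Nat.div_lt_iff_lt_mul (pos_of_mem_Sn hb)).mpr h
  by_cases hsq : (q + 1) * (q + 1) ≤ n
  · have hq1 : q + 1 ∈ Sn n := mem_Sn_of_mul_self_le q.succ_pos hsq
    by_contra! hgt
    have hlt : q + 1 < n / a := by omega
    have h₁ : a < n / (q + 1) := by
      simpa only [div_div_of_mem_Sn ha] using div_lt_div_of_mem_Sn hq1 (div_mem_Sn ha) hlt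
    have h₂ : n / (q + 1) < b := by
      simpa only [q, div_div_of_mem_Sn hb] using div_lt_div_of_mem_Sn hq hq1 q.lt_succ_self
    exact (hcons _ (div_mem_Sn hq1) h₁).not_gt h₂
  · have hqa : q ≤ a := by
      by_contra! haq
      exact (hcons q hq haq).not_gt hqb
    calc n / a ≤ n / q := Nat.div_le_div_left hqa hq0
      _ ≤ q * (q + 2) / q := Nat.div_le_div_right (by nlinarith)
      _ = q + 2 := Nat.mul_div_cancel_left _ hq0

lemma mul_div_le_of_consecutive (ha : a ∈ Sn n) (hb : b ∈ Sn n) (hab : a < b)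
    (hcons : ∀ d ∈ Sn n, a < d → b ≤ d) : b * (n / a) ≤ b * (n / b) + 2 * (n / a + b) := by
  rcases le_or_gt (b * b) n with hsmall | hlarge
  · have hba := eq_succ_of_consecutive_of_mul_self_le hab hcons hsmall
    have h₁ := Nat.mul_div_le n a
    have h₂ := Nat.lt_mul_div_succ n (pos_of_mem_Sn hb)
    subst hba
    generalize n / a = p at *
    generalize n / (a + 1) = q at *
    linarith
  · have := Nat.mul_le_mul_left b (div_le_div_add_two_of_consecutive ha hb hcons hlarge)
    rw [Nat.mul_add] at this
    linarith [Nat.zero_le (n / a)]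

end Consecutive

lemma sum_Sn_le (n : ℕ) : ∑ d ∈ Sn n, (d : ℝ) ≤ n * (1 + Real.log n) := by
  have hSn : Sn n ⊆ Icc 1 n := fun d hd => mem_Icc.mpr ⟨pos_of_mem_Sn hd, le_of_mem_Sn hd⟩
  calc ∑ d ∈ Sn n, (d : ℝ) = ∑ d ∈ Sn n, ((n / d : ℕ) : ℝ) :=
        sum_nbij' (n / ·) (n / ·) (fun _ => div_mem_Sn) (fun _ => div_mem_Sn)
          (fun _ => div_div_of_mem_Sn) (fun _ => div_div_of_mem_Sn)
          (fun d hd => by rw [div_div_of_mem_Sn hd])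
    _ ≤ ∑ d ∈ Icc 1 n, (n : ℝ) * (d : ℝ)⁻¹ :=
        (sum_le_sum fun _ _ => by rw [← div_eq_mul_inv]; exact Nat.cast_div_le).trans
          (sum_le_sum_of_subset_of_nonneg hSn fun _ _ _ => by positivity)
    _ = n * (harmonic n : ℝ) := by
        rw [← mul_sum, harmonic_eq_sum_Icc]
        push_cast
        rfl
    _ ≤ n * (1 + Real.log n) := by gcongr; exact harmonic_le_one_add_log n

section Enumeration

variable {n : ℕ}

lemma kseq_mem (i : Fin (Sn n).card) : kseq n i ∈ Sn n :=
  ((Sn n).orderIsoOfFin rfl i).2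

lemma kseq_strictMono : StrictMono (kseq n) :=
  fun _ _ h => ((Sn n).orderIsoOfFin rfl).strictMono h

lemma exists_kseq_eq {d : ℕ} (hd : d ∈ Sn n) : ∃ i, kseq n i = d :=
  ⟨((Sn n).orderIsoOfFin rfl).symm ⟨d, hd⟩, by simp [kseq]⟩

lemma kseq_rev (i : Fin (Sn n).card) : kseq n i.rev = n / kseq n i := by
  have hrev : (fun j => n / kseq n j.rev) = (Sn n).orderEmbOfFin rfl :=
    Finset.orderEmbOfFin_unique rfl (fun j => div_mem_Sn (kseq_mem _))
      fun _ _ h => div_lt_div_of_mem_Sn (kseq_mem _) (kseq_mem _)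
        (kseq_strictMono (Fin.rev_lt_rev.mpr h))
  have h : n / kseq n i.rev = kseq n i :=
    (congrFun hrev i).trans (Finset.coe_orderIsoOfFin_apply _ _ _).symm
  rw [← h, div_div_of_mem_Sn (kseq_mem _)]

noncomputable def kseqNat (n t : ℕ) : ℕ :=
  if h : t < (Sn n).card then kseq n ⟨t, h⟩ else 0

lemma kseqNat_val (i : Fin (Sn n).card) : kseqNat n i = kseq n i := dif_pos i.2

lemma kseqNat_mem {t : ℕ} (h : t < (Sn n).card) : kseqNat n t ∈ Sn n :=
  kseqNat_val ⟨t, h⟩ ▸ kseq_mem _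

lemma kseqNat_lt_kseqNat {t u : ℕ} (htu : t < u) (hu : u < (Sn n).card) :
    kseqNat n t < kseqNat n u := by
  rw [kseqNat_val ⟨t, htu.trans hu⟩, kseqNat_val ⟨u, hu⟩]
  exact kseq_strictMono htu

lemma kseqNat_rev {t : ℕ} (h : t < (Sn n).card) :
    kseqNat n ((Sn n).card - 1 - t) = n / kseqNat n t := by
  have := kseq_rev ⟨t, h⟩
  rwa [← kseqNat_val, ← kseqNat_val, Fin.val_rev, Nat.sub_add_eq, Nat.sub_right_comm] at this

lemma kseqNat_succ_le {t d : ℕ} (h : t + 1 < (Sn n).card) (hd : d ∈ Sn n)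
    (hlt : kseqNat n t < d) : kseqNat n (t + 1) ≤ d := by
  obtain ⟨i, rfl⟩ := exists_kseq_eq hd
  rw [kseqNat_val ⟨t, by omega⟩] at hlt
  have hti : t < (i : ℕ) := kseq_strictMono.lt_iff_lt.mp hlt
  rw [kseqNat_val ⟨t + 1, h⟩]
  exact kseq_strictMono.monotone (Fin.le_iff_val_le_val.mpr hti)

lemma sum_range_kseqNat :
    ∑ t ∈ range (Sn n).card, (kseqNat n t : ℝ) = ∑ d ∈ Sn n, (d : ℝ) := by
  rw [← Fin.sum_univ_eq_sum_range]
  simp only [kseqNat_val]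
  exact sum_bij (fun i _ => kseq n i) (fun i _ => kseq_mem i)
    (fun _ _ _ _ h => kseq_strictMono.injective h)
    (fun d hd => (exists_kseq_eq hd).imp fun i hi => ⟨mem_univ i, hi⟩) fun _ _ => rfl

end Enumeration

section AntidiagonalMatrices

open Matrix

variable {s : ℕ}

def TmatRInv (s : ℕ) : Matrix (Fin s) (Fin s) ℝ :=
  fun i j => (if (i : ℕ) + j + 1 = s then 1 else 0) - (if (i : ℕ) + j = s then 1 else 0)

lemma sum_ite_val_add_eq {M : Type*} [AddCommMonoid M] (f : ℕ → M) (m : ℕ) :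
    ∑ l : Fin s, (if (l : ℕ) + m = s then f l else 0) =
      if 0 < m ∧ m ≤ s then f (s - m) else 0 := by
  rw [Fin.sum_univ_eq_sum_range (fun l => if l + m = s then f l else 0)]
  split_ifs with hm
  · rw [sum_eq_single (s - m) (fun l _ hl => if_neg (by omega)) (fun h => absurd
      (mem_range.mpr (by omega)) h), if_pos (by omega)]
  · exact sum_eq_zero fun l hl => if_neg (by rw [mem_range] at hl; omega)

lemma TmatR_mul_TmatRInv : TmatR s * TmatRInv s = 1 := by
  ext i j
  simp only [mul_apply, TmatR, TmatRInv, mul_sub, mul_ite, mul_one, mul_zero, sum_sub_distrib,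
    add_assoc, one_apply, Fin.ext_iff]
  rw [sum_ite_val_add_eq (fun l => if (i : ℕ) + (l + 1) ≤ s then (1 : ℝ) else 0),
    sum_ite_val_add_eq (fun l => if (i : ℕ) + (l + 1) ≤ s then (1 : ℝ) else 0)]
  have := i.is_lt
  split_ifs <;> norm_num <;> omega

lemma inv_smul_diagonal_mul_TmatR_mul_diagonal {c : ℝ} (hc : c ≠ 0) {w : Fin s → ℝ}
    (hw : ∀ i, w i ≠ 0) :
    (c • (diagonal w * TmatR s * diagonal w))⁻¹ =
      c⁻¹ • (diagonal w⁻¹ * TmatRInv s * diagonal w⁻¹) := by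
  have hD : diagonal w * diagonal w⁻¹ = 1 := by
    rw [diagonal_mul_diagonal, ← diagonal_one]
    exact congrArg diagonal (funext fun i => mul_inv_cancel₀ (hw i))
  refine inv_eq_right_inv ?_
  rw [Matrix.smul_mul, Matrix.mul_smul, smul_smul, mul_inv_cancel₀ hc, one_smul]
  simp only [Matrix.mul_assoc]
  rw [← Matrix.mul_assoc (diagonal w) (diagonal w⁻¹), hD, Matrix.one_mul,
    ← Matrix.mul_assoc (TmatR s), TmatR_mul_TmatRInv, Matrix.one_mul, hD]

lemma TmatR_mul_diagonal_mul_TmatRInv_apply (x : ℕ → ℝ) (i l : Fin s) :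
    (TmatR s * diagonal (fun k : Fin s => x k) * TmatRInv s) i l =
      (if (i : ℕ) ≤ l then x (s - 1 - l) else 0) - (if (i : ℕ) < l then x (s - l) else 0) := by
  rw [mul_apply]
  simp only [mul_diagonal, TmatR, TmatRInv, mul_sub, mul_ite, mul_one, mul_zero,
    sum_sub_distrib, add_assoc]
  rw [sum_ite_val_add_eq (fun k => (if (i : ℕ) + (k + 1) ≤ s then (1 : ℝ) else 0) * x k),
    sum_ite_val_add_eq (fun k => (if (i : ℕ) + (k + 1) ≤ s then (1 : ℝ) else 0) * x k)]
  have := l.is_lt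
  congr 1 <;> split_ifs <;>
    first | (exfalso; omega) | rw [one_mul, Nat.sub_sub, add_comm] | simp

lemma TmatR_sandwich_apply (x : ℕ → ℝ) (i j : Fin s) :
    (TmatR s * diagonal (fun k : Fin s => x k) * TmatRInv s * diagonal (fun k : Fin s => x k) *
        TmatR s) i j =
      ∑ l ∈ Ico (i : ℕ) (s - j), x l * x (s - 1 - l) -
        ∑ l ∈ Ico ((i : ℕ) + 1) (s - j), x l * x (s - l) := by
  have hIco : ∀ a, (range s).filter (fun l => a ≤ l ∧ l < s - j) = Ico a (s - j) := by
    intro a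
    ext l
    simp only [mem_filter, mem_range, mem_Ico]
    omega
  rw [mul_apply, ← hIco, ← hIco, sum_filter, sum_filter, ← sum_sub_distrib]
  simp only [mul_diagonal, TmatR_mul_diagonal_mul_TmatRInv_apply, TmatR]
  rw [Fin.sum_univ_eq_sum_range (fun l => ((if (i : ℕ) ≤ l then x (s - 1 - l) else 0) -
    (if (i : ℕ) < l then x (s - l) else 0)) * x l * (if l + j + 1 ≤ s then 1 else 0))]
  refine sum_congr rfl fun l _ => ?_
  split_ifs <;> first | (exfalso; omega) | ring

end AntidiagonalMatrices

lemma abs_sum_Ico_sub_sum_Ico_le {f g : ℕ → ℝ} {a b s : ℕ} (hb : b ≤ s) (hfa : 0 ≤ f a)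
    (hfg : ∀ l ∈ Ico 1 s, f l ≤ g l) :
    |∑ l ∈ Ico a b, f l - ∑ l ∈ Ico (a + 1) b, g l| ≤ f a + ∑ l ∈ Ico 1 s, (g l - f l) := by
  have hsub : Ico (a + 1) b ⊆ Ico 1 s := Ico_subset_Ico (by omega) hb
  have hgap₀ : 0 ≤ ∑ l ∈ Ico (a + 1) b, (g l - f l) :=
    sum_nonneg fun l hl => sub_nonneg.mpr (hfg l (hsub hl))
  have hgap : ∑ l ∈ Ico (a + 1) b, (g l - f l) ≤ ∑ l ∈ Ico 1 s, (g l - f l) :=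
    sum_le_sum_of_subset_of_nonneg hsub fun l hl _ => sub_nonneg.mpr (hfg l hl)
  rcases lt_or_ge a b with hab | hab
  · rw [sum_eq_sum_Ico_succ_bot hab, add_sub_assoc, ← neg_sub, ← sum_sub_distrib, abs_le]
    constructor <;> linarith
  · rw [Ico_eq_empty_of_le hab, Ico_eq_empty_of_le (by omega), sum_empty, sum_empty, sub_zero,
      abs_zero]
    linarith

section Mertens

open Matrix

variable {n : ℕ}

lemma Utilde_eq :
    Utilde n = (n : ℝ) • (diagonal (fun i => (kseq n i : ℝ)⁻¹) * TmatR (Sn n).card *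
      diagonal (fun i => (kseq n i : ℝ)⁻¹)) := by
  ext i j
  simp only [Utilde, TmatR, Matrix.smul_apply, mul_diagonal, diagonal_mul, smul_eq_mul]
  split_ifs
  · rw [div_eq_mul_inv, mul_inv]
    ring
  · ring

lemma Mtilde_eq (hn : 0 < n) :
    Mtilde n = (n : ℝ)⁻¹ • (TmatR _ * diagonal (fun i : Fin (Sn n).card => (kseqNat n i : ℝ)) *
      TmatRInv _ * diagonal (fun i : Fin (Sn n).card => (kseqNat n i : ℝ)) * TmatR _) := by
  have hk : ∀ i, (kseq n i : ℝ)⁻¹ ≠ 0 := fun i => inv_ne_zero (by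
    exact_mod_cast (pos_of_mem_Sn (kseq_mem i)).ne')
  rw [Mtilde, Utilde_eq, inv_smul_diagonal_mul_TmatR_mul_diagonal (by positivity) hk]
  simp only [Pi.inv_def, inv_inv, kseqNat_val, Matrix.mul_smul, Matrix.smul_mul, Matrix.mul_assoc]

lemma Mtilde_apply (hn : 0 < n) (i j : Fin (Sn n).card) :
    Mtilde n i j = (n : ℝ)⁻¹ *
      (∑ l ∈ Ico (i : ℕ) ((Sn n).card - j),
          (kseqNat n l : ℝ) * kseqNat n ((Sn n).card - 1 - l) -
        ∑ l ∈ Ico ((i : ℕ) + 1) ((Sn n).card - j),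
          (kseqNat n l : ℝ) * kseqNat n ((Sn n).card - l)) := by
  rw [Mtilde_eq hn, Matrix.smul_apply, TmatR_sandwich_apply (fun l => (kseqNat n l : ℝ)),
    smul_eq_mul]

lemma kseqNat_gap_le {l : ℕ} (hl : l ∈ Ico 1 (Sn n).card) :
    (kseqNat n l : ℝ) * kseqNat n ((Sn n).card - l) ≤
      kseqNat n l * kseqNat n ((Sn n).card - 1 - l) +
        2 * (kseqNat n ((Sn n).card - l) + kseqNat n l) := by
  obtain ⟨hl1, hls⟩ := mem_Ico.mp hl
  have hprev : (Sn n).card - 1 - (l - 1) = (Sn n).card - l := by omega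
  have key := mul_div_le_of_consecutive (kseqNat_mem (n := n) (t := l - 1) (by omega))
    (kseqNat_mem hls) (kseqNat_lt_kseqNat (by omega) hls) fun d hd hlt => by
      simpa only [Nat.sub_add_cancel hl1] using kseqNat_succ_le (by omega) hd hlt
  rw [← kseqNat_rev (by omega), hprev, ← kseqNat_rev hls] at key
  exact_mod_cast key

lemma sum_kseqNat_gap_le :
    ∑ l ∈ Ico 1 (Sn n).card, ((kseqNat n l : ℝ) * kseqNat n ((Sn n).card - l) -
      kseqNat n l * kseqNat n ((Sn n).card - 1 - l)) ≤ 4 * (n * (1 + Real.log n)) := by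
  have hreflect : ∑ l ∈ Ico 1 (Sn n).card, (kseqNat n ((Sn n).card - l) : ℝ) =
      ∑ l ∈ Ico 1 (Sn n).card, (kseqNat n l : ℝ) := by
    rw [sum_Ico_reflect (fun l => (kseqNat n l : ℝ)) 1 (Nat.le_succ _), Nat.add_sub_cancel_left,
      Nat.add_sub_cancel]
  have hsum : ∑ l ∈ Ico 1 (Sn n).card, (kseqNat n l : ℝ) ≤ ∑ d ∈ Sn n, (d : ℝ) := by
    rw [← sum_range_kseqNat, range_eq_Ico]
    exact sum_le_sum_of_subset_of_nonneg (Ico_subset_Ico_left zero_le_one) fun _ _ _ => by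
      positivity
  calc _ ≤ ∑ l ∈ Ico 1 (Sn n).card,
          2 * ((kseqNat n ((Sn n).card - l) : ℝ) + kseqNat n l) :=
        sum_le_sum fun l hl => by linarith [kseqNat_gap_le hl]
    _ = 4 * ∑ l ∈ Ico 1 (Sn n).card, (kseqNat n l : ℝ) := by
        rw [← mul_sum, sum_add_distrib, hreflect]
        ring
    _ ≤ 4 * (n * (1 + Real.log n)) := by linarith [sum_Sn_le n]

theorem abs_Mtilde_apply_le (hn : 0 < n) (i j : Fin (Sn n).card) :
    |Mtilde n i j| ≤ 5 + 4 * Real.log n := by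
  have hnR : (0 : ℝ) < n := by exact_mod_cast hn
  have hdiag : (kseqNat n i : ℝ) * kseqNat n ((Sn n).card - 1 - i) ≤ n := by
    rw [kseqNat_rev i.is_lt]
    exact_mod_cast Nat.mul_div_le n _
  have hmono : ∀ l ∈ Ico 1 (Sn n).card,
      (kseqNat n l : ℝ) * kseqNat n ((Sn n).card - 1 - l) ≤
        kseqNat n l * kseqNat n ((Sn n).card - l) := fun l hl => by
    obtain ⟨hl1, hls⟩ := mem_Ico.mp hl
    gcongr
    exact (kseqNat_lt_kseqNat (by omega) (by omega)).le
  have hsum := abs_sum_Ico_sub_sum_Ico_le (a := i) (Nat.sub_le _ j) (by positivity) hmono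
  rw [Mtilde_apply hn, abs_mul, abs_inv, abs_of_pos hnR, inv_mul_le_iff₀ hnR]
  linarith [sum_kseqNat_gap_le (n := n)]

end Mertens

/-- All entries of the deformed Mertens matrix `M̃_n` are `O(log n)`. -/
theorem stmt_18 :
    ∃ C : ℝ, 0 < C ∧ ∀ n : ℕ, 0 < n →
      ∀ i j : Fin (Sn n).card, |Mtilde n i j| ≤ C * Real.log (n + 1) := by
  refine ⟨14, by norm_num, fun n hn i j => ?_⟩
  have hlog : Real.log n ≤ Real.log (n + 1) :=
    Real.log_le_log (by exact_mod_cast hn) (by linarith)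
  have hlog2 : Real.log 2 ≤ Real.log (n + 1) :=
    Real.log_le_log two_pos (by norm_cast; omega)
  linarith [abs_Mtilde_apply_le hn i j, Real.log_two_gt_d9]
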